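/- (1D linear consistency) Under the hypotheses of the previous operator identity, truncating ∂U_i/∂t = ∑_{k≥0} ℓ_{2k} γ^k δ^{2k} U_i to residuals O(γ^p) and setting γ = 1 yields a discrete model whose error relative to the full operator L applied to a smooth field is dominated by ℓ_{2p} δ^{2p}; for the diffusion operator L = ∂_x², where ℓ_{2k} = O(1/H²) and δ^{2p}U = O(H^{2p}) on smooth fields, the truncated model is consistent with the diffusion PDE to error O(H^{2p−2}) as the grid size H → 0. -/

import Mathlib

open Asymptotics Filter

lemma itW {F : ℝ → ℝ} (hF : ContDiff ℝ (⊤:ℕ∞) F) {s : Set ℝ} (hs : UniqueDiffOn ℝ s) {y : ℝ}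
    (hy : y ∈ s) (n : ℕ) : iteratedDerivWithin n F s y = iteratedDeriv n F y := by
  have h : HasFTaylorSeriesUpTo (⊤ : ℕ∞) F (ftaylorSeries ℝ F) :=
    contDiff_iff_ftaylorSeries.mp hF
  have h1 := (h.hasFTaylorSeriesUpToOn s).eq_iteratedFDerivWithin_of_uniqueDiffOn
    (by exact_mod_cast le_top : ((n:ℕ∞) : WithTop ℕ∞) ≤ ((⊤:ℕ∞) : WithTop ℕ∞)) hs hy
  have h2 := h.eq_iteratedFDeriv (by exact_mod_cast le_top : ((n:ℕ∞) : WithTop ℕ∞) ≤ ((⊤:ℕ∞) : WithTop ℕ∞)) y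
  rw [iteratedDerivWithin_eq_iteratedFDerivWithin, iteratedDeriv_eq_iteratedFDeriv, ← h1, ← h2]

lemma taylor_bigO (N : ℕ) (hN : 1 ≤ N) (F : ℝ → ℝ) (hF : ContDiff ℝ (⊤:ℕ∞) F) :
    (fun t : ℝ => F t - ∑ j ∈ Finset.range N,
      iteratedDeriv j F 0 / (Nat.factorial j) * t ^ j) =O[nhdsWithin 0 (Set.Ioi 0)]
      (fun t : ℝ => t ^ N) := by
  obtain ⟨n, rfl⟩ : ∃ n, N = n + 1 := ⟨N - 1, (Nat.succ_pred_eq_of_pos hN).symm⟩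
  have h01 : (0:ℝ) ≤ 1 := zero_le_one
  have hud : UniqueDiffOn ℝ (Set.Icc (0:ℝ) 1) := uniqueDiffOn_Icc zero_lt_one
  have hcd : ContDiffOn ℝ (n + 1) F (Set.Icc (0:ℝ) 1) := (hF.of_le (by exact_mod_cast le_top : ((n+1:ℕ):WithTop ℕ∞) ≤ ((⊤:ℕ∞):WithTop ℕ∞))).contDiffOn
  have hcont : ContinuousOn (iteratedDerivWithin (n+1) F (Set.Icc (0:ℝ) 1)) (Set.Icc (0:ℝ) 1) :=
    hcd.continuousOn_iteratedDerivWithin le_rfl hud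
  obtain ⟨C, hC⟩ := isCompact_Icc.exists_bound_of_continuousOn hcont
  rw [Asymptotics.isBigO_iff]
  refine ⟨C / Nat.factorial n, ?_⟩
  filter_upwards [Ioc_mem_nhdsGT zero_lt_one] with t ht
  have hbound := taylor_mean_remainder_bound h01 hcd ⟨ht.1.le, ht.2⟩ hC
  have htw : taylorWithinEval F n (Set.Icc (0:ℝ) 1) 0 t
      = ∑ j ∈ Finset.range (n+1), iteratedDeriv j F 0 / (Nat.factorial j) * t ^ j := by
    rw [taylor_within_apply]
    refine Finset.sum_congr rfl fun j _ => ?_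
    rw [itW hF hud (Set.left_mem_Icc.2 h01) j]
    rw [smul_eq_mul]
    ring
  rw [htw] at hbound
  calc ‖F t - ∑ j ∈ Finset.range (n+1), iteratedDeriv j F 0 / (Nat.factorial j) * t ^ j‖
      ≤ C * (t - 0) ^ (n+1) / Nat.factorial n := hbound
    _ = C / Nat.factorial n * ‖t ^ (n+1)‖ := by
        rw [sub_zero, Real.norm_eq_abs, abs_of_pos (pow_pos ht.1 _)]; ring

lemma itAff (U : ℝ → ℝ) (hU : ContDiff ℝ (⊤:ℕ∞) U) (x a : ℝ) :
    ∀ (n : ℕ) (h₀ : ℝ),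
      iteratedDeriv n (fun h : ℝ => U (x + a * h)) h₀ = a ^ n * iteratedDeriv n U (x + a * h₀) := by
  intro n
  induction n with
  | zero => intro h₀; simp
  | succ n IH =>
    intro h₀
    rw [iteratedDeriv_succ]
    have hfun : iteratedDeriv n (fun h : ℝ => U (x + a * h))
        = fun h : ℝ => a ^ n * iteratedDeriv n U (x + a * h) := funext IH
    rw [hfun]
    have hdiff : DifferentiableAt ℝ (iteratedDeriv n U) (x + a * h₀) :=
      (hU.differentiable_iteratedDeriv n (by exact_mod_cast ENat.coe_lt_top n : ((n:ℕ):WithTop ℕ∞) < ((⊤:ℕ∞):WithTop ℕ∞))).differentiableAt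
    have haff : HasDerivAt (fun h : ℝ => x + a * h) a h₀ := by
      simpa using ((hasDerivAt_id h₀).const_mul a).const_add x
    have hcomp : HasDerivAt (fun h : ℝ => iteratedDeriv n U (x + a * h))
        (iteratedDeriv (n+1) U (x + a * h₀) * a) h₀ := by
      have h2 := (hdiff.hasDerivAt).comp h₀ haff
      rw [iteratedDeriv_succ]
      exact h2
      
    have := (hcomp.const_mul (a ^ n)).deriv
    rw [this]
    ring

lemma taylor_shift (N : ℕ) (hN : 1 ≤ N) (U : ℝ → ℝ) (hU : ContDiff ℝ (⊤:ℕ∞) U) (x a : ℝ) :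
    (fun H : ℝ => U (x + a * H) - ∑ j ∈ Finset.range N,
        a ^ j * (iteratedDeriv j U x / (Nat.factorial j)) * H ^ j)
      =O[nhdsWithin 0 (Set.Ioi 0)] (fun H : ℝ => H ^ N) := by
  have hg : ContDiff ℝ (⊤:ℕ∞) (fun h : ℝ => U (x + a * h)) :=
    hU.comp (contDiff_const.add (contDiff_const.mul contDiff_id))
  have heq : (fun H : ℝ => U (x + a * H) - ∑ j ∈ Finset.range N,
        a ^ j * (iteratedDeriv j U x / (Nat.factorial j)) * H ^ j)
      = (fun H : ℝ => (fun h : ℝ => U (x + a * h)) H - ∑ j ∈ Finset.range N,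
        iteratedDeriv j (fun h : ℝ => U (x + a * h)) 0 / (Nat.factorial j) * H ^ j) := by
    funext H
    congr 1
    refine Finset.sum_congr rfl fun j _ => ?_
    rw [itAff U hU x a j 0, mul_zero, add_zero]
    ring
  rw [heq]
  exact taylor_bigO N hN _ hg

lemma poly_zero : ∀ (N : ℕ) (q : ℕ → ℝ),
    (fun w : ℝ => ∑ j ∈ Finset.range N, q j * w ^ j) =O[nhdsWithin 0 (Set.Ioi 0)]
      (fun w : ℝ => w ^ N) → ∀ j < N, q j = 0 := by
  intro N
  induction N with
  | zero => intro q _ j hj; omega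
  | succ N IH =>
    intro q h j hj
    have hcont : Continuous (fun w : ℝ => ∑ j ∈ Finset.range (N+1), q j * w ^ j) :=
      continuous_finset_sum _ fun j _ => continuous_const.mul (continuous_pow j)
    have hlim : Tendsto (fun w : ℝ => ∑ j ∈ Finset.range (N+1), q j * w ^ j)
        (nhdsWithin 0 (Set.Ioi 0)) (nhds (q 0)) := by
      have := (hcont.tendsto 0).mono_left (nhdsWithin_le_nhds (s := Set.Ioi (0:ℝ)))
      convert this using 2
      rw [Finset.sum_eq_single_of_mem 0 (Finset.mem_range.2 (Nat.succ_pos N))]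
      · simp
      · intro b _ hb
        simp [zero_pow hb]
    have hzero : Tendsto (fun w : ℝ => ∑ j ∈ Finset.range (N+1), q j * w ^ j)
        (nhdsWithin 0 (Set.Ioi 0)) (nhds 0) := by
      apply h.trans_tendsto
      have : Tendsto (fun w : ℝ => w ^ (N+1)) (nhds 0) (nhds ((0:ℝ) ^ (N+1))) :=
        (continuous_pow (N+1)).tendsto 0
      rw [zero_pow (Nat.succ_ne_zero N)] at this
      exact this.mono_left nhdsWithin_le_nhds
    have hq0 : q 0 = 0 := tendsto_nhds_unique hlim hzero
    have hsplit : (fun w : ℝ => ∑ j ∈ Finset.range (N+1), q j * w ^ j)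
        = (fun w : ℝ => w * ∑ j ∈ Finset.range N, q (j+1) * w ^ j) := by
      funext w
      rw [Finset.sum_range_succ' (fun j => q j * w ^ j) N, hq0, Finset.mul_sum]
      simp only [zero_mul, pow_zero, mul_one, add_zero]
      exact Finset.sum_congr rfl fun j _ => by ring
    rw [hsplit] at h
    have h2 := h.mul (isBigO_refl (fun w : ℝ => w⁻¹) (nhdsWithin 0 (Set.Ioi 0)))
    have hO : (fun w : ℝ => ∑ j ∈ Finset.range N, q (j+1) * w ^ j)
        =O[nhdsWithin 0 (Set.Ioi 0)] (fun w : ℝ => w ^ N) := by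
      refine h2.congr' ?_ ?_
      · filter_upwards [self_mem_nhdsWithin] with w hw
        have hw0 : w ≠ 0 := ne_of_gt hw
        field_simp
      · filter_upwards [self_mem_nhdsWithin] with w hw
        have hw0 : w ≠ 0 := ne_of_gt hw
        rw [pow_succ]
        field_simp
    have hrest := IH (fun j => q (j+1)) hO
    match j, hj with
    | 0, _ => exact hq0
    | (j+1), hj => exact hrest j (by omega)

lemma fsm : ContDiff ℝ (⊤:ℕ∞) (fun s : ℝ => (2 * Real.arsinh (s / 2))^2) := by
  have h1 : ContDiff ℝ (⊤:ℕ∞) (fun s : ℝ => s / 2) := contDiff_id.div_const 2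
  exact (contDiff_const.mul h1.arsinh).pow 2

lemma f_zero : (fun s : ℝ => (2 * Real.arsinh (s / 2))^2) 0 = 0 := by
  simp [Real.arsinh_zero]

lemma fodd (n : ℕ) (hn : Odd n) :
    iteratedDeriv n (fun s : ℝ => (2 * Real.arsinh (s / 2))^2) 0 = 0 := by
  set f := fun s : ℝ => (2 * Real.arsinh (s / 2))^2 with hf
  have hsymm : (fun s : ℝ => f (-s)) = f := by
    funext s
    simp only [hf, neg_div, Real.arsinh_neg]
    ring
  have h := iteratedDeriv_comp_neg n f 0
  rw [hsymm, neg_zero, hn.neg_one_pow] at h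
  have h2 : iteratedDeriv n f 0 = - iteratedDeriv n f 0 := by simpa using h
  linarith [h2]

lemma pair_sum (t : ℕ → ℝ) : ∀ p : ℕ,
    ∑ j ∈ Finset.range (2*p), t j = ∑ k ∈ Finset.range p, (t (2*k) + t (2*k+1)) := by
  intro p
  induction p with
  | zero => simp
  | succ p IH =>
    rw [Nat.mul_succ, Finset.sum_range_succ, Finset.sum_range_succ, Finset.sum_range_succ, IH]
    ring

lemma binom_sinh (k : ℕ) (w : ℝ) :
    ∑ m ∈ Finset.range (2*k + 1), (-1:ℝ)^m * (Nat.choose (2*k) m : ℝ)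
      * Real.exp (((k:ℝ) - m) * w) = (2 * Real.sinh (w/2))^(2*k) := by
  have hσ : 2 * Real.sinh (w/2) = -(Real.exp (-(w/2)) - Real.exp (w/2)) := by
    rw [Real.sinh_eq]; ring
  rw [hσ, neg_pow, Even.neg_one_pow (⟨k, two_mul k⟩ : Even (2*k)), one_mul, sub_pow]
  refine Finset.sum_congr rfl fun m hm => ?_
  have hm' : m ≤ 2*k := by
    have := Finset.mem_range.1 hm; omega
  rw [← Real.exp_nat_mul, ← Real.exp_nat_mul]
  have hcast : ((2*k - m : ℕ) : ℝ) = 2*(k:ℝ) - m := by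
    push_cast [Nat.cast_sub hm']; ring
  have hexp : (m:ℝ) * -(w/2) + ((2*k - m : ℕ) : ℝ) * (w/2) = ((k:ℝ) - m) * w := by
    rw [hcast]; ring
  have hsign : (-1:ℝ)^(m + 2*k) = (-1:ℝ)^m := by
    rw [pow_add]
    simp [Even.neg_one_pow (⟨k, two_mul k⟩ : Even (2*k))]
  have hprod : Real.exp ((m:ℝ) * -(w/2)) * Real.exp (((2*k - m : ℕ):ℝ) * (w/2))
      = Real.exp (((k:ℝ) - m) * w) := by
    rw [← Real.exp_add, hexp]
  rw [hsign]
  linear_combination (-((-1:ℝ)^m * (Nat.choose (2*k) m : ℝ))) * hprod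

lemma claimA (p : ℕ) (c : ℕ → ℝ) (N : ℕ) (hN : 1 ≤ N) (V : ℝ → ℝ)
    (hV : ContDiff ℝ (⊤:ℕ∞) V) (y : ℝ) :
    (fun H : ℝ => (∑ k ∈ Finset.Ico 1 p, c k * ∑ m ∈ Finset.range (2*k+1),
        (-1:ℝ)^m * (Nat.choose (2*k) m : ℝ) * V (y + ((k:ℝ) - m) * H))
      - ∑ j ∈ Finset.range N, (iteratedDeriv j V y / (Nat.factorial j)) *
          (∑ k ∈ Finset.Ico 1 p, c k * ∑ m ∈ Finset.range (2*k+1),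
            (-1:ℝ)^m * (Nat.choose (2*k) m : ℝ) * ((k:ℝ) - m)^j) * H^j)
      =O[nhdsWithin 0 (Set.Ioi 0)] (fun H : ℝ => H^N) := by
  have hre : (fun H : ℝ => (∑ k ∈ Finset.Ico 1 p, c k * ∑ m ∈ Finset.range (2*k+1),
        (-1:ℝ)^m * (Nat.choose (2*k) m : ℝ) * V (y + ((k:ℝ) - m) * H))
      - ∑ j ∈ Finset.range N, (iteratedDeriv j V y / (Nat.factorial j)) *
          (∑ k ∈ Finset.Ico 1 p, c k * ∑ m ∈ Finset.range (2*k+1),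
            (-1:ℝ)^m * (Nat.choose (2*k) m : ℝ) * ((k:ℝ) - m)^j) * H^j)
      = (fun H : ℝ => ∑ k ∈ Finset.Ico 1 p, c k * ∑ m ∈ Finset.range (2*k+1),
          (-1:ℝ)^m * (Nat.choose (2*k) m : ℝ) *
            (V (y + ((k:ℝ) - m) * H) - ∑ j ∈ Finset.range N,
              ((k:ℝ) - m)^j * (iteratedDeriv j V y / (Nat.factorial j)) * H^j)) := by
    funext H
    simp only [Finset.mul_sum, Finset.sum_mul, mul_sub, Finset.sum_sub_distrib]
    congr 1
    rw [Finset.sum_comm]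
    refine Finset.sum_congr rfl fun k _ => ?_
    rw [Finset.sum_comm]
    refine Finset.sum_congr rfl fun m _ => ?_
    refine Finset.sum_congr rfl fun j _ => ?_
    ring
  rw [hre]
  refine Asymptotics.IsBigO.fun_sum fun k _ => ?_
  refine Asymptotics.IsBigO.const_mul_left ?_ _
  refine Asymptotics.IsBigO.fun_sum fun m _ => ?_
  exact Asymptotics.IsBigO.const_mul_left (taylor_shift N hN V hV y ((k:ℝ) - m)) _

lemma fTaylorPoly (p : ℕ) (hp : 1 ≤ p) (c : ℕ → ℝ)
    (hc : ∀ k, c k = iteratedDeriv (2*k) (fun s : ℝ => (2 * Real.arsinh (s / 2))^2) 0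
        / (Nat.factorial (2*k))) (z : ℝ) :
    ∑ j ∈ Finset.range (2*p),
        iteratedDeriv j (fun s : ℝ => (2 * Real.arsinh (s / 2))^2) 0 / (Nat.factorial j) * z^j
      = ∑ k ∈ Finset.Ico 1 p, c k * z^(2*k) := by
  rw [pair_sum (fun j => iteratedDeriv j (fun s : ℝ => (2 * Real.arsinh (s / 2))^2) 0
      / (Nat.factorial j) * z^j) p]
  have hterm : ∀ k ∈ Finset.range p,
      (iteratedDeriv (2*k) (fun s : ℝ => (2 * Real.arsinh (s / 2))^2) 0
          / (Nat.factorial (2*k)) * z^(2*k)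
        + iteratedDeriv (2*k+1) (fun s : ℝ => (2 * Real.arsinh (s / 2))^2) 0
          / (Nat.factorial (2*k+1)) * z^(2*k+1)) = c k * z^(2*k) := by
    intro k _
    rw [fodd (2*k+1) ⟨k, by ring⟩, hc k]
    simp
  rw [Finset.sum_congr rfl hterm]
  rw [Finset.range_eq_Ico, Finset.sum_eq_sum_Ico_succ_bot hp (fun k => c k * z^(2*k))]
  have hc0 : c 0 = 0 := by
    rw [hc 0]
    simp [iteratedDeriv_zero, Real.arsinh_zero]
  rw [hc0]
  simp

lemma claimC (p : ℕ) (hp : 1 ≤ p) (c : ℕ → ℝ)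
    (hc : ∀ k, c k = iteratedDeriv (2*k) (fun s : ℝ => (2 * Real.arsinh (s / 2))^2) 0
        / (Nat.factorial (2*k))) :
    (fun w : ℝ => (∑ k ∈ Finset.Ico 1 p, c k * ∑ m ∈ Finset.range (2*k+1),
        (-1:ℝ)^m * (Nat.choose (2*k) m : ℝ) * Real.exp (0 + ((k:ℝ) - m) * w)) - w^2)
      =O[nhdsWithin 0 (Set.Ioi 0)] (fun w : ℝ => w^(2*p)) := by
  set σ : ℝ → ℝ := fun w => 2 * Real.sinh (w/2) with hσdef
  have hR := taylor_bigO (2*p) (by omega) _ fsm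
  have hR' : (fun z : ℝ => (fun s : ℝ => (2 * Real.arsinh (s / 2))^2) z
      - ∑ k ∈ Finset.Ico 1 p, c k * z^(2*k)) =O[nhdsWithin 0 (Set.Ioi 0)]
      (fun z : ℝ => z^(2*p)) := by
    refine hR.congr_left fun z => ?_
    rw [fTaylorPoly p hp c hc z]
  have hσcont : Continuous σ :=
    continuous_const.mul (Real.continuous_sinh.comp (continuous_id.div_const 2))
  have htend : Filter.Tendsto σ (nhdsWithin 0 (Set.Ioi 0)) (nhdsWithin 0 (Set.Ioi 0)) := by
    rw [tendsto_nhdsWithin_iff]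
    constructor
    · have h0 : σ 0 = 0 := by simp [hσdef]
      have := (hσcont.tendsto 0).mono_left (nhdsWithin_le_nhds (s := Set.Ioi (0:ℝ)))
      rwa [h0] at this
    · filter_upwards [self_mem_nhdsWithin] with w hw
      exact mul_pos two_pos (Real.sinh_pos_iff.2 (half_pos hw))
  have hcomp := hR'.comp_tendsto htend
  have hσsm : ContDiff ℝ (⊤:ℕ∞) σ :=
    contDiff_const.mul (Real.contDiff_sinh.comp (contDiff_id.div_const 2))
  have hσO : σ =O[nhdsWithin 0 (Set.Ioi 0)] (fun w : ℝ => w) := by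
    have hd : DifferentiableAt ℝ σ 0 :=
      (hσsm.differentiable (by simp)).differentiableAt
    have := hd.isBigO_sub
    have h2 : (fun w : ℝ => σ w) =O[nhds 0] (fun w : ℝ => w) := by
      refine this.congr' ?_ ?_
      · filter_upwards with w
        simp [hσdef]
      · filter_upwards with w
        simp
    exact h2.mono nhdsWithin_le_nhds
  have hfin := hcomp.trans ((hσO.pow (2*p)))
  refine hfin.neg_left.congr_left fun w => ?_
  have hL5 : (fun s : ℝ => (2 * Real.arsinh (s / 2))^2) (σ w) = w^2 := by
    simp only [hσdef]
    rw [show (2 : ℝ) * Real.sinh (w/2) / 2 = Real.sinh (w/2) by ring, Real.arsinh_sinh]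
    ring
  have hbin : ∀ k, ∑ m ∈ Finset.range (2*k + 1), (-1:ℝ)^m * (Nat.choose (2*k) m : ℝ)
      * Real.exp (0 + ((k:ℝ) - m) * w) = (σ w)^(2*k) := by
    intro k
    rw [← binom_sinh k w]
    exact Finset.sum_congr rfl fun m _ => by rw [zero_add]
  rw [show (∑ k ∈ Finset.Ico 1 p, c k * ∑ m ∈ Finset.range (2*k+1),
        (-1:ℝ)^m * (Nat.choose (2*k) m : ℝ) * Real.exp (0 + ((k:ℝ) - m) * w))
      = ∑ k ∈ Finset.Ico 1 p, c k * (σ w)^(2*k) from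
    Finset.sum_congr rfl fun k _ => by rw [hbin k]]
  rw [← hL5]
  simp only [Function.comp_apply]
  ring

lemma Sval (p : ℕ) (hp : 2 ≤ p) (c : ℕ → ℝ)
    (hc : ∀ k, c k = iteratedDeriv (2*k) (fun s : ℝ => (2 * Real.arsinh (s / 2))^2) 0
        / (Nat.factorial (2*k))) :
    ∀ j < 2*p, (∑ k ∈ Finset.Ico 1 p, c k * ∑ m ∈ Finset.range (2*k+1),
        (-1:ℝ)^m * (Nat.choose (2*k) m : ℝ) * ((k:ℝ) - m)^j)
      = (Nat.factorial j : ℝ) * (if j = 2 then 1 else 0) := by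
  have hexp_itd : ∀ j : ℕ, iteratedDeriv j Real.exp = Real.exp := by
    intro j
    induction j with
    | zero => rfl
    | succ n IH => rw [iteratedDeriv_succ, IH, Real.deriv_exp]
  have hB := claimA p c (2*p) (by omega) Real.exp Real.contDiff_exp 0
  have hC := claimC p (by omega) c hc
  have hD := hC.sub hB
  set S : ℕ → ℝ := fun j => ∑ k ∈ Finset.Ico 1 p, c k * ∑ m ∈ Finset.range (2*k+1),
      (-1:ℝ)^m * (Nat.choose (2*k) m : ℝ) * ((k:ℝ) - m)^j with hSdef
  have hpoly : (fun w : ℝ => ∑ j ∈ Finset.range (2*p),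
      (S j / (Nat.factorial j) - (if j = 2 then (1:ℝ) else 0)) * w^j)
      =O[nhdsWithin 0 (Set.Ioi 0)] (fun w : ℝ => w^(2*p)) := by
    refine hD.congr_left fun w => ?_
    have h1 : ∑ j ∈ Finset.range (2*p),
        (S j / (Nat.factorial j) - (if j = 2 then (1:ℝ) else 0)) * w^j
        = (∑ j ∈ Finset.range (2*p), (iteratedDeriv j Real.exp 0 / (Nat.factorial j))
            * S j * w^j)
          - ∑ j ∈ Finset.range (2*p), (if j = 2 then (1:ℝ) else 0) * w^j := by
      rw [← Finset.sum_sub_distrib]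
      refine Finset.sum_congr rfl fun j _ => ?_
      rw [hexp_itd j, Real.exp_zero]
      ring
    have h2 : ∑ j ∈ Finset.range (2*p), (if j = 2 then (1:ℝ) else 0) * w^j = w^2 := by
      rw [Finset.sum_congr rfl (fun j _ => show (if j = 2 then (1:ℝ) else 0) * w^j
          = if j = 2 then w^2 else 0 by split <;> simp_all)]
      rw [Finset.sum_ite_eq' (Finset.range (2*p)) 2 (fun _ => w^2)]
      simp [Finset.mem_range]
      omega
    rw [h1, h2]
    ring
  intro j hj
  have := poly_zero (2*p) _ hpoly j (by omega)
  have hfac : (Nat.factorial j : ℝ) ≠ 0 := Nat.cast_ne_zero.2 (Nat.factorial_ne_zero j)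
  have : S j / (Nat.factorial j) = (if j = 2 then (1:ℝ) else 0) := by linarith [this]
  field_simp at this
  rw [show (∑ k ∈ Finset.Ico 1 p, c k * ∑ m ∈ Finset.range (2*k+1),
      (-1:ℝ)^m * (Nat.choose (2*k) m : ℝ) * ((k:ℝ) - m)^j) = S j from rfl, this]

/-- 1D linear consistency for diffusion: with `c k` the Taylor coefficient of `x^{2k}` in
`(2 arcsinh(x/2))²`, the truncated (to residuals `O(γᵖ)`, at `γ = 1`) grid model
`(1/H²) ∑_{k=1}^{p-1} c k δ^{2k}U` approximates `U''` with error `O(H^{2p-2})` as `H → 0⁺`,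
for smooth fields `U`. -/
theorem stmt12 (p : ℕ) (hp : 2 ≤ p) (U : ℝ → ℝ) (hU : ContDiff ℝ (⊤ : ℕ∞) U) (x : ℝ)
    (c : ℕ → ℝ)
    (hc : ∀ k, c k = iteratedDeriv (2*k) (fun s : ℝ => (2 * Real.arsinh (s / 2))^2) 0
        / (Nat.factorial (2*k))) :
    (fun H : ℝ =>
      (1 / H^2) * (∑ k ∈ Finset.Ico 1 p, c k *
        (∑ m ∈ Finset.range (2*k + 1),
          (-1 : ℝ)^m * (Nat.choose (2*k) m : ℝ) * U (x + ((k : ℝ) - (m : ℝ)) * H)))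
      - iteratedDeriv 2 U x)
      =O[nhdsWithin 0 (Set.Ioi 0)] (fun H : ℝ => H^(2*p - 2)) := by
  have hU' : ContDiff ℝ (⊤:ℕ∞) U := hU.of_le (by simp)
  have hA := claimA p c (2*p) (by omega) U hU' x
  have hS := Sval p hp c hc
  have hΦ : (fun H : ℝ => (∑ k ∈ Finset.Ico 1 p, c k *
        (∑ m ∈ Finset.range (2*k + 1),
          (-1 : ℝ)^m * (Nat.choose (2*k) m : ℝ) * U (x + ((k : ℝ) - (m : ℝ)) * H)))
      - iteratedDeriv 2 U x * H^2) =O[nhdsWithin 0 (Set.Ioi 0)]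
      (fun H : ℝ => H^(2*p)) := by
    refine hA.congr_left fun H => ?_
    congr 1
    have hterm : ∀ j ∈ Finset.range (2*p),
        (iteratedDeriv j U x / (Nat.factorial j)) *
          (∑ k ∈ Finset.Ico 1 p, c k * ∑ m ∈ Finset.range (2*k+1),
            (-1:ℝ)^m * (Nat.choose (2*k) m : ℝ) * ((k:ℝ) - m)^j) * H^j
        = if j = 2 then iteratedDeriv 2 U x * H^2 else 0 := by
      intro j hj
      rw [hS j (Finset.mem_range.1 hj)]
      split
      · rename_i h2
        subst h2
        have : (Nat.factorial 2 : ℝ) ≠ 0 := by norm_num [Nat.factorial]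
        field_simp
      · simp
    rw [Finset.sum_congr rfl hterm,
      Finset.sum_ite_eq' (Finset.range (2*p)) 2 (fun _ => iteratedDeriv 2 U x * H^2)]
    rw [if_pos (Finset.mem_range.2 (by omega))]
  have hmul := hΦ.mul (Asymptotics.isBigO_refl (fun H : ℝ => (H^2)⁻¹)
    (nhdsWithin 0 (Set.Ioi 0)))
  refine hmul.congr' ?_ ?_
  · filter_upwards [self_mem_nhdsWithin] with H hw
    have hH : (H:ℝ) ≠ 0 := ne_of_gt hw
    rw [one_div, sub_mul, mul_inv_cancel_right₀ (pow_ne_zero 2 hH)]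
    ring
  · filter_upwards [self_mem_nhdsWithin] with H hw
    have hH : (H:ℝ) ≠ 0 := ne_of_gt hw
    rw [show 2*p = (2*p-2) + 2 by omega, pow_add]
    field_simp
    rw [Nat.add_sub_cancel]
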